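/- With T°_M(H,G) as the M-truncated statistic, E|T(H,G) - T°_M(H,G)| ≤ (2^{|V(H)|} - 1)/(√M (1 - p)) · √(Var[T(H,G)]). -/
import Mathlib


open Finset

noncomputable section

/-- `M_H(s) = ∏_{(i,j)∈E(H)} a_{s_i s_j}`: indicator that the tuple `s` of distinct
vertices maps every edge of `H` to an edge of `G`. -/
def MH {k : ℕ} {V : Type*} (H : SimpleGraph (Fin k)) [DecidableRel H.Adj]
    (G : SimpleGraph V) [DecidableRel G.Adj] (s : Fin k ↪ V) : ℝ :=
  ∏ i : Fin k, ∏ j : Fin k,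
    if H.Adj i j then (if G.Adj (s i) (s j) then 1 else 0) else 1

/-- `N(H,G) = |Aut(H)|⁻¹ ∑_s M_H(s)`: the number of copies of `H` in `G`. -/
def NHG {k : ℕ} {V : Type*} [Fintype V] [DecidableEq V] (H : SimpleGraph (Fin k))
    [DecidableRel H.Adj] (G : SimpleGraph V) [DecidableRel G.Adj] : ℝ :=
  (Nat.card (H ≃g H) : ℝ)⁻¹ * ∑ s : Fin k ↪ V, MH H G s

/-- `t_H(A)`: the number of copies of `H` in `G` whose vertex set contains `A`. -/
def tH {k : ℕ} {V : Type*} [Fintype V] [DecidableEq V] (H : SimpleGraph (Fin k))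
    [DecidableRel H.Adj] (G : SimpleGraph V) [DecidableRel G.Adj] (A : Finset V) : ℝ :=
  (Nat.card (H ≃g H) : ℝ)⁻¹ *
    ∑ s ∈ Finset.univ.filter (fun s : Fin k ↪ V => A ⊆ Finset.univ.map s), MH H G s

/-- Probability weight of a sampling outcome `ω : V → Bool` when each vertex is retained
independently with probability `p`. -/
def wt {V : Type*} [Fintype V] (p : ℝ) (ω : V → Bool) : ℝ :=
  ∏ v : V, if ω v then p else 1 - p

/-- Expectation under the subgraph sampling model with sampling ratio `p`. -/
def expec {V : Type*} [Fintype V] [DecidableEq V] (p : ℝ) (f : (V → Bool) → ℝ) : ℝ :=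
  ∑ ω : V → Bool, wt p ω * f ω

/-- `X_s = ∏_{u ∈ s̄} X_u`: indicator that all entries of the tuple `s` are sampled. -/
def Xs {k : ℕ} {V : Type*} (s : Fin k ↪ V) (ω : V → Bool) : ℝ :=
  ∏ u ∈ Finset.univ.map s, if ω u then 1 else 0

/-- `T(H,G) = |Aut(H)|⁻¹ ∑_s M_H(s) X_s`: the number of copies of `H` spanned by the
sampled vertices. -/
def TH {k : ℕ} {V : Type*} [Fintype V] [DecidableEq V] (H : SimpleGraph (Fin k))
    [DecidableRel H.Adj] (G : SimpleGraph V) [DecidableRel G.Adj] (ω : V → Bool) : ℝ :=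
  (Nat.card (H ≃g H) : ℝ)⁻¹ * ∑ s : Fin k ↪ V, MH H G s * Xs s ω

open scoped Classical

/-- `Var[T(H,G)]` under sampling ratio `p`. -/
def varT {k : ℕ} {V : Type*} [Fintype V] [DecidableEq V] (H : SimpleGraph (Fin k))
    [DecidableRel H.Adj] (G : SimpleGraph V) [DecidableRel G.Adj] (p : ℝ) : ℝ :=
  expec p (fun ω => (TH H G ω - expec p (TH H G)) ^ 2)

/-- The event `𝓒_M(s)`: for every nonempty `A ⊆ s̄`,
`t_H(A)² ≤ M p^{2|A| - 2|V(H)|} Var[T(H,G)]`. -/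
def CMev {k : ℕ} {V : Type*} [Fintype V] [DecidableEq V] (H : SimpleGraph (Fin k))
    [DecidableRel H.Adj] (G : SimpleGraph V) [DecidableRel G.Adj] (M p : ℝ)
    (s : Fin k ↪ V) : Prop :=
  ∀ A : Finset V, A ⊆ Finset.univ.map s → A.Nonempty →
    tH H G A ^ 2 ≤ M * (p ^ (2 * A.card) / p ^ (2 * k)) * varT H G p

/-- The truncated statistic `T°_M(H,G) = |Aut(H)|⁻¹ ∑_{s : 𝓒_M(s)} M_H(s) X_s`. -/
def Tcirc {k : ℕ} {V : Type*} [Fintype V] [DecidableEq V] (H : SimpleGraph (Fin k))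
    [DecidableRel H.Adj] (G : SimpleGraph V) [DecidableRel G.Adj] (M p : ℝ)
    (ω : V → Bool) : ℝ :=
  (Nat.card (H ≃g H) : ℝ)⁻¹ *
    ∑ s ∈ Finset.univ.filter (fun s : Fin k ↪ V => CMev H G M p s), MH H G s * Xs s ω

section AuxLemmas
set_option linter.unusedSectionVars false

variable {k : ℕ} {V : Type*} [Fintype V] [DecidableEq V]
  (H : SimpleGraph (Fin k)) [DecidableRel H.Adj]
  (G : SimpleGraph V) [DecidableRel G.Adj]

lemma MH_nonneg (s : Fin k ↪ V) : 0 ≤ MH H G s := by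
  unfold MH
  refine Finset.prod_nonneg fun i _ => Finset.prod_nonneg fun j _ => ?_
  split_ifs <;> norm_num

lemma MH_le_one (s : Fin k ↪ V) : MH H G s ≤ 1 := by
  unfold MH
  refine Finset.prod_le_one (fun i _ => Finset.prod_nonneg fun j _ => ?_)
    (fun i _ => Finset.prod_le_one (fun j _ => ?_) (fun j _ => ?_)) <;>
    split_ifs <;> norm_num

lemma aut_pos : (0:ℝ) < (Nat.card (H ≃g H) : ℝ) := by
  have hfin : Finite (H ≃g H) :=
    Finite.of_injective (fun f : H ≃g H => f.toEquiv)
      (fun f g h => by cases f; cases g; simpa using h)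
  have : Nonempty (H ≃g H) := ⟨RelIso.refl _⟩
  exact_mod_cast Nat.card_pos

lemma tH_nonneg (A : Finset V) : 0 ≤ tH H G A :=
  mul_nonneg (inv_nonneg.2 (Nat.cast_nonneg _))
    (Finset.sum_nonneg fun s _ => MH_nonneg H G s)

variable {W : Type*} [Fintype W] [DecidableEq W]

lemma expec_smul (p c : ℝ) (f : (W → Bool) → ℝ) :
    expec p (fun ω => c * f ω) = c * expec p f := by
  unfold expec
  rw [Finset.mul_sum]
  exact Finset.sum_congr rfl fun ω _ => by ring

lemma expec_add (p : ℝ) (f g : (W → Bool) → ℝ) :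
    expec p (fun ω => f ω + g ω) = expec p f + expec p g := by
  unfold expec
  rw [← Finset.sum_add_distrib]
  exact Finset.sum_congr rfl fun ω _ => by ring

lemma expec_sum {ι : Type*} (p : ℝ) (S : Finset ι) (f : ι → (W → Bool) → ℝ) :
    expec p (fun ω => ∑ i ∈ S, f i ω) = ∑ i ∈ S, expec p (f i) := by
  unfold expec
  simp_rw [Finset.mul_sum]
  exact Finset.sum_comm

lemma expec_prod_ind (p : ℝ) (A : Finset W) :
    expec p (fun ω => ∏ u ∈ A, if ω u then (1:ℝ) else 0) = p ^ A.card := by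
  unfold expec wt
  have key : ∀ ω : W → Bool,
      (∏ v : W, if ω v then p else 1 - p) * (∏ u ∈ A, if ω u then (1:ℝ) else 0)
      = ∏ v : W, ((if ω v then p else 1 - p) *
          (if v ∈ A then (if ω v then (1:ℝ) else 0) else 1)) := by
    intro ω
    rw [Finset.prod_mul_distrib]
    congr 1
    rw [Finset.prod_ite_mem Finset.univ A (fun u => if ω u then (1:ℝ) else 0),
      Finset.univ_inter]
  simp_rw [key]
  have swap := Finset.prod_univ_sum (fun _ : W => (Finset.univ : Finset Bool))
    (fun v b => (if b then p else 1 - p) * (if v ∈ A then (if b then (1:ℝ) else 0) else 1))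
  rw [Fintype.piFinset_univ] at swap
  rw [← swap]
  have hval : ∀ v : W,
      (∑ b : Bool, (if b then p else 1 - p) *
        (if v ∈ A then (if b then (1:ℝ) else 0) else 1)) = if v ∈ A then p else 1 := by
    intro v
    rw [Fintype.sum_bool]
    by_cases hv : v ∈ A <;> simp [hv] <;> ring
  simp_rw [hval]
  rw [Finset.prod_ite_mem Finset.univ A (fun _ => p), Finset.univ_inter, Finset.prod_const]

lemma expec_one (p : ℝ) : expec p (fun _ : W → Bool => (1:ℝ)) = 1 := by
  simpa using expec_prod_ind p (∅ : Finset W)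

lemma prod_ind_eq (A : Finset W) (ω : W → Bool) :
    (∏ u ∈ A, if ω u then (1:ℝ) else 0) = if ∀ u ∈ A, ω u then 1 else 0 := by
  split_ifs with h
  · exact Finset.prod_eq_one fun u hu => by simp [h u hu]
  · push_neg at h
    obtain ⟨u, hu, hωu⟩ := h
    exact Finset.prod_eq_zero hu (by simp [hωu])

lemma Xs_nonneg (s : Fin k ↪ V) (ω : V → Bool) : 0 ≤ Xs s ω :=
  Finset.prod_nonneg fun u _ => by split_ifs <;> norm_num

lemma expec_Xs (p : ℝ) (s : Fin k ↪ V) : expec p (fun ω => Xs s ω) = p ^ k := by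
  have := expec_prod_ind p (Finset.univ.map s)
  simpa [Xs, Finset.card_map] using this

lemma Xs_mul (s t : Fin k ↪ V) (ω : V → Bool) :
    Xs s ω * Xs t ω
      = ∏ u ∈ Finset.univ.map s ∪ Finset.univ.map t, if ω u then (1:ℝ) else 0 := by
  unfold Xs
  rw [prod_ind_eq, prod_ind_eq, prod_ind_eq, ite_zero_mul_ite_zero, one_mul]
  refine if_congr ?_ rfl rfl
  constructor
  · rintro ⟨h1, h2⟩ u hu
    rcases Finset.mem_union.1 hu with h | h
    · exact h1 u h
    · exact h2 u h
  · intro h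
    exact ⟨fun u hu => h u (Finset.mem_union_left _ hu),
      fun u hu => h u (Finset.mem_union_right _ hu)⟩

end AuxLemmas


section Heavy
set_option linter.unusedSectionVars false
set_option maxHeartbeats 1000000

variable {k : ℕ} {V : Type*} [Fintype V] [DecidableEq V]
  (H : SimpleGraph (Fin k)) [DecidableRel H.Adj]
  (G : SimpleGraph V) [DecidableRel G.Adj]

lemma expec_sum_MX (p : ℝ) (S : Finset (Fin k ↪ V)) :
    expec p (fun ω => (Nat.card (H ≃g H) : ℝ)⁻¹ * ∑ s ∈ S, MH H G s * Xs s ω)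
      = (Nat.card (H ≃g H) : ℝ)⁻¹ * ∑ s ∈ S, MH H G s * p ^ k := by
  rw [expec_smul]
  congr 1
  rw [expec_sum]
  refine Finset.sum_congr rfl fun s _ => ?_
  rw [expec_smul, expec_Xs]

lemma expec_TT (p : ℝ) :
    expec p (fun ω => (∑ s : Fin k ↪ V, MH H G s * Xs s ω) *
        (∑ t : Fin k ↪ V, MH H G t * Xs t ω))
      = ∑ s : Fin k ↪ V, ∑ t : Fin k ↪ V,
          MH H G s * MH H G t * p ^ ((Finset.univ.map s ∪ Finset.univ.map t).card) := by
  have h1 : ∀ ω : V → Bool, (∑ s : Fin k ↪ V, MH H G s * Xs s ω) *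
      (∑ t : Fin k ↪ V, MH H G t * Xs t ω)
      = ∑ s : Fin k ↪ V, ∑ t : Fin k ↪ V,
          MH H G s * MH H G t *
            ∏ u ∈ Finset.univ.map s ∪ Finset.univ.map t, (if ω u then (1:ℝ) else 0) := by
    intro ω
    rw [Finset.sum_mul_sum]
    refine Finset.sum_congr rfl fun s _ => Finset.sum_congr rfl fun t _ => ?_
    rw [← Xs_mul]
    ring
  simp_rw [h1]
  rw [expec_sum]
  refine Finset.sum_congr rfl fun s _ => ?_
  rw [expec_sum]
  refine Finset.sum_congr rfl fun t _ => ?_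
  rw [expec_smul, expec_prod_ind]

lemma varT_pair (p : ℝ) :
    varT H G p = ((Nat.card (H ≃g H) : ℝ)⁻¹) ^ 2 * ∑ s : Fin k ↪ V, ∑ t : Fin k ↪ V,
      MH H G s * MH H G t *
        (p ^ ((Finset.univ.map s ∪ Finset.univ.map t).card) - p ^ (2 * k)) := by
  set a := (Nat.card (H ≃g H) : ℝ)⁻¹ with hadef
  set e := expec p (TH H G) with hedef
  have heta : expec p (fun ω => TH H G ω) = e := rfl
  have hvar : varT H G p = expec p (fun ω => TH H G ω ^ 2) - e ^ 2 := by
    unfold varT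
    have hfn : (fun ω => (TH H G ω - expec p (TH H G)) ^ 2)
        = (fun ω => TH H G ω ^ 2 + ((-2*e) * TH H G ω + e^2 * 1)) := by
      funext ω; rw [← hedef]; ring
    rw [hfn, expec_add, expec_add, expec_smul, expec_smul, expec_one, heta]
    ring
  have hsq : expec p (fun ω => TH H G ω ^ 2)
      = a ^ 2 * ∑ s : Fin k ↪ V, ∑ t : Fin k ↪ V,
          MH H G s * MH H G t * p ^ ((Finset.univ.map s ∪ Finset.univ.map t).card) := by
    have hfn : (fun ω => TH H G ω ^ 2) = (fun ω => a^2 *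
        ((∑ s : Fin k ↪ V, MH H G s * Xs s ω) * (∑ t : Fin k ↪ V, MH H G t * Xs t ω))) := by
      funext ω; unfold TH; rw [← hadef]; ring
    rw [hfn, expec_smul, expec_TT]
  have hmean : e = a * ∑ s : Fin k ↪ V, MH H G s * p ^ k := by
    rw [hedef]
    exact expec_sum_MX H G p Finset.univ
  rw [hvar, hsq, hmean]
  have hmean2 : (a * ∑ s : Fin k ↪ V, MH H G s * p ^ k) ^ 2
      = a ^ 2 * ∑ s : Fin k ↪ V, ∑ t : Fin k ↪ V, MH H G s * MH H G t * p ^ (2*k) := by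
    rw [mul_pow, sq (∑ s : Fin k ↪ V, MH H G s * p ^ k), Finset.sum_mul_sum]
    congr 1
    refine Finset.sum_congr rfl fun s _ => Finset.sum_congr rfl fun t _ => ?_
    rw [two_mul, pow_add]
    ring
  rw [hmean2, ← mul_sub, ← Finset.sum_sub_distrib]
  congr 1
  refine Finset.sum_congr rfl fun s _ => ?_
  rw [← Finset.sum_sub_distrib]
  refine Finset.sum_congr rfl fun t _ => ?_
  ring

lemma sum_tH_sq (K : ℕ) :
    ∑ A ∈ Finset.powersetCard K (Finset.univ : Finset V), tH H G A ^ 2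
      = ((Nat.card (H ≃g H) : ℝ)⁻¹) ^ 2 * ∑ s : Fin k ↪ V, ∑ t : Fin k ↪ V,
          MH H G s * MH H G t *
            (((Finset.univ.map s ∩ Finset.univ.map t).card.choose K : ℕ) : ℝ) := by
  set a := (Nat.card (H ≃g H) : ℝ)⁻¹ with hadef
  have hA : ∀ A : Finset V, tH H G A ^ 2 = a ^ 2 * ∑ s : Fin k ↪ V, ∑ t : Fin k ↪ V,
      (if A ⊆ Finset.univ.map s ∧ A ⊆ Finset.univ.map t
        then MH H G s * MH H G t else 0) := by
    intro A
    unfold tH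
    rw [← hadef, mul_pow, sq (∑ s ∈ Finset.univ.filter
      (fun s : Fin k ↪ V => A ⊆ Finset.univ.map s), MH H G s)]
    congr 1
    rw [Finset.sum_mul_sum]
    rw [Finset.sum_filter]
    refine Finset.sum_congr rfl fun s _ => ?_
    rw [Finset.sum_filter]
    by_cases hs : A ⊆ Finset.univ.map s
    · rw [if_pos hs]
      refine Finset.sum_congr rfl fun t _ => ?_
      by_cases ht : A ⊆ Finset.univ.map t <;> simp [hs, ht]
    · rw [if_neg hs]
      exact (Finset.sum_eq_zero fun t _ => by simp [hs]).symm
  simp_rw [hA]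
  rw [← Finset.mul_sum]
  congr 1
  rw [Finset.sum_comm]
  refine Finset.sum_congr rfl fun s _ => ?_
  rw [Finset.sum_comm]
  refine Finset.sum_congr rfl fun t _ => ?_
  rw [← Finset.sum_filter]
  have hfe : (Finset.powersetCard K (Finset.univ : Finset V)).filter
      (fun A => A ⊆ Finset.univ.map s ∧ A ⊆ Finset.univ.map t)
      = Finset.powersetCard K (Finset.univ.map s ∩ Finset.univ.map t) := by
    ext A
    simp only [Finset.mem_filter, Finset.mem_powersetCard, Finset.subset_inter_iff]
    constructor
    · rintro ⟨⟨-, h2⟩, h3, h4⟩; exact ⟨⟨h3, h4⟩, h2⟩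
    · rintro ⟨⟨h3, h4⟩, h2⟩; exact ⟨⟨Finset.subset_univ _, h2⟩, h3, h4⟩
  rw [hfe, Finset.sum_const, Finset.card_powersetCard, nsmul_eq_mul]
  ring

lemma card_map_univ (s : Fin k ↪ V) : (Finset.univ.map s).card = k := by
  simp

lemma pair_ineq (p : ℝ) (hp0 : 0 < p) (hp1 : p ≤ 1) (K : ℕ) (hK : 1 ≤ K)
    (s t : Fin k ↪ V) :
    (1 - p) * (p ^ (2 * k) / p ^ K) *
        (((Finset.univ.map s ∩ Finset.univ.map t).card.choose K : ℕ) : ℝ)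
      ≤ (k.choose K : ℝ) *
        (p ^ ((Finset.univ.map s ∪ Finset.univ.map t).card) - p ^ (2 * k)) := by
  set i := (Finset.univ.map s ∩ Finset.univ.map t).card with hidef
  set u := (Finset.univ.map s ∪ Finset.univ.map t).card with hudef
  have hq : (0:ℝ) ≤ 1 - p := by linarith
  have hui : u + i = 2 * k := by
    rw [hudef, hidef, Finset.card_union_add_card_inter, card_map_univ, card_map_univ]
    omega
  have hik : i ≤ k := by
    have := Finset.card_le_card (Finset.inter_subset_left
      (s₁ := Finset.univ.map s) (s₂ := Finset.univ.map t))
    rwa [card_map_univ] at this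
  have hRHS0 : 0 ≤ p ^ u - p ^ (2*k) :=
    sub_nonneg.2 (pow_le_pow_of_le_one hp0.le hp1 (by omega))
  by_cases hiK : i < K
  · rw [Nat.choose_eq_zero_of_lt hiK]
    push_cast
    rw [mul_zero]
    positivity
  · push_neg at hiK
    have hC : p ^ (2*k) / p ^ K = p ^ u * p ^ (i - K) := by
      rw [div_eq_iff (by positivity : (p:ℝ) ^ K ≠ 0), mul_assoc, ← pow_add, ← pow_add]
      congr 1
      omega
    have hRHS : p ^ u - p ^ (2*k) = p ^ u * (1 - p ^ i) := by
      rw [mul_sub, mul_one, ← pow_add, hui]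
    have hpi1 : p ^ i ≤ 1 := pow_le_one₀ hp0.le hp1
    have hpip : p ^ i ≤ p := by
      have := pow_le_pow_of_le_one hp0.le hp1 (le_trans hK hiK)
      rwa [pow_one] at this
    have h1 : (1 - p) * p ^ (i - K) ≤ 1 - p ^ i := by
      calc (1 - p) * p ^ (i - K) ≤ (1 - p) * 1 :=
            mul_le_mul_of_nonneg_left (pow_le_one₀ hp0.le hp1) hq
        _ = 1 - p := mul_one _
        _ ≤ 1 - p ^ i := by linarith
    have h2 : ((i.choose K : ℕ) : ℝ) ≤ (k.choose K : ℝ) :=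
      Nat.cast_le.2 (Nat.choose_le_choose K hik)
    have h3 : (0:ℝ) ≤ 1 - p ^ i := by linarith
    have h4 : (0:ℝ) ≤ p ^ u := by positivity
    have h5 : (0:ℝ) ≤ ((i.choose K : ℕ) : ℝ) := Nat.cast_nonneg _
    rw [hC, hRHS]
    calc (1-p) * (p^u * p^(i-K)) * ((i.choose K : ℕ) : ℝ)
        = (p^u * ((i.choose K : ℕ) : ℝ)) * ((1-p) * p^(i-K)) := by ring
      _ ≤ (p^u * ((i.choose K : ℕ) : ℝ)) * (1 - p^i) :=
          mul_le_mul_of_nonneg_left h1 (by positivity)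
      _ ≤ (p^u * (k.choose K : ℝ)) * (1 - p^i) := by nlinarith
      _ = (k.choose K : ℝ) * (p^u * (1-p^i)) := by ring

lemma compare_lemma (p : ℝ) (hp0 : 0 < p) (hp1 : p ≤ 1) (K : ℕ) (hK : 1 ≤ K) :
    (1 - p) * ∑ A ∈ Finset.powersetCard K (Finset.univ : Finset V),
        p ^ (2 * k) / p ^ K * tH H G A ^ 2
      ≤ (k.choose K : ℝ) * varT H G p := by
  rw [varT_pair]
  have hfact : ∑ A ∈ Finset.powersetCard K (Finset.univ : Finset V),
      p ^ (2 * k) / p ^ K * tH H G A ^ 2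
      = p ^ (2 * k) / p ^ K *
        ∑ A ∈ Finset.powersetCard K (Finset.univ : Finset V), tH H G A ^ 2 := by
    rw [Finset.mul_sum]
  rw [hfact, sum_tH_sq]
  set a := (Nat.card (H ≃g H) : ℝ)⁻¹ with hadef
  have ha2 : (0:ℝ) ≤ a ^ 2 := sq_nonneg a
  have hL : (1 - p) * (p ^ (2*k) / p ^ K * (a^2 * ∑ s : Fin k ↪ V, ∑ t : Fin k ↪ V,
      MH H G s * MH H G t *
        (((Finset.univ.map s ∩ Finset.univ.map t).card.choose K : ℕ) : ℝ)))
      = a^2 * ∑ s : Fin k ↪ V, ∑ t : Fin k ↪ V,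
        MH H G s * MH H G t * ((1-p) * (p ^ (2*k) / p ^ K) *
          (((Finset.univ.map s ∩ Finset.univ.map t).card.choose K : ℕ) : ℝ)) := by
    simp only [Finset.mul_sum]
    exact Finset.sum_congr rfl fun s _ => Finset.sum_congr rfl fun t _ => by ring
  have hR : (k.choose K : ℝ) * (a^2 * ∑ s : Fin k ↪ V, ∑ t : Fin k ↪ V,
      MH H G s * MH H G t *
        (p ^ ((Finset.univ.map s ∪ Finset.univ.map t).card) - p ^ (2 * k)))
      = a^2 * ∑ s : Fin k ↪ V, ∑ t : Fin k ↪ V,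
        MH H G s * MH H G t * ((k.choose K : ℝ) *
          (p ^ ((Finset.univ.map s ∪ Finset.univ.map t).card) - p ^ (2 * k))) := by
    simp only [Finset.mul_sum]
    exact Finset.sum_congr rfl fun s _ => Finset.sum_congr rfl fun t _ => by ring
  rw [hL, hR]
  refine mul_le_mul_of_nonneg_left ?_ ha2
  refine Finset.sum_le_sum fun s _ => Finset.sum_le_sum fun t _ => ?_
  have hMM : 0 ≤ MH H G s * MH H G t := mul_nonneg (MH_nonneg H G s) (MH_nonneg H G t)
  exact mul_le_mul_of_nonneg_left (pair_ineq p hp0 hp1 K hK s t) hMM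

end Heavy


set_option maxHeartbeats 1000000 in
/-- `E|T(H,G) - T°_M(H,G)| ≤ (2^{|V(H)|}-1)/(√M (1-p)) · √(Var[T(H,G)])`. -/
theorem stmt15 {k : ℕ} {V : Type*} [Fintype V] [DecidableEq V]
    (H : SimpleGraph (Fin k)) [DecidableRel H.Adj] (hconn : H.Connected)
    (G : SimpleGraph V) [DecidableRel G.Adj]
    (M p : ℝ) (hM : 0 < M) (hp0 : 0 < p) (hp1 : p < 1) :
    expec p (fun ω => |TH H G ω - Tcirc H G M p ω|) ≤
      ((2 : ℝ) ^ k - 1) / (Real.sqrt M * (1 - p)) * Real.sqrt (varT H G p) := by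
  classical
  have ha : (0:ℝ) < (Nat.card (H ≃g H) : ℝ) := aut_pos H
  set a : ℝ := (Nat.card (H ≃g H) : ℝ)⁻¹ with hadef
  have ha' : 0 < a := inv_pos.2 ha
  have hk : 1 ≤ k := by
    obtain ⟨i⟩ := hconn.nonempty
    exact i.pos
  have hq : (0:ℝ) < 1 - p := by linarith
  set Vr := varT H G p with hVrdef
  have hVr0 : 0 ≤ Vr := by
    rw [hVrdef]
    unfold varT expec
    refine Finset.sum_nonneg fun ω _ => mul_nonneg ?_ (sq_nonneg _)
    exact Finset.prod_nonneg fun v _ => by split_ifs <;> linarith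
  have hRHS0 : 0 ≤ ((2 : ℝ) ^ k - 1) / (Real.sqrt M * (1 - p)) * Real.sqrt Vr := by
    have h2k : (1:ℝ) ≤ 2 ^ k := one_le_pow₀ (by norm_num)
    exact mul_nonneg (div_nonneg (by linarith)
      (mul_nonneg (Real.sqrt_nonneg M) hq.le)) (Real.sqrt_nonneg _)
  set B : Finset (Fin k ↪ V) :=
    Finset.univ.filter (fun s : Fin k ↪ V => ¬ CMev H G M p s) with hBdef
  have hdiff : ∀ ω, TH H G ω - Tcirc H G M p ω = a * ∑ s ∈ B, MH H G s * Xs s ω := by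
    intro ω
    unfold TH Tcirc
    rw [← Finset.sum_filter_add_sum_filter_not Finset.univ (fun s => CMev H G M p s)
      (fun s => MH H G s * Xs s ω)]
    rw [hBdef, ← hadef]
    ring
  have habs : (fun ω => |TH H G ω - Tcirc H G M p ω|)
      = fun ω => a * ∑ s ∈ B, MH H G s * Xs s ω := by
    funext ω
    rw [hdiff ω, abs_of_nonneg]
    exact mul_nonneg ha'.le (Finset.sum_nonneg fun s _ =>
      mul_nonneg (MH_nonneg H G s) (Xs_nonneg s ω))
  have hE : expec p (fun ω => |TH H G ω - Tcirc H G M p ω|)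
      = a * ∑ s ∈ B, MH H G s * p ^ k := by
    rw [habs]
    exact expec_sum_MX H G p B
  rcases eq_or_lt_of_le hVr0 with hV0 | hVpos
  · -- degenerate case : variance zero
    have hBempty : B = ∅ := by
      by_contra hne
      obtain ⟨s, hs⟩ := Finset.nonempty_iff_ne_empty.2 hne
      have hsB : ¬ CMev H G M p s := (Finset.mem_filter.1 hs).2
      unfold CMev at hsB
      push_neg at hsB
      obtain ⟨A, hA1, hA2, hgt⟩ := hsB
      rw [← hVrdef, ← hV0, mul_zero] at hgt
      have htA : 0 < tH H G A := by
        rcases lt_or_eq_of_le (tH_nonneg H G A) with h | h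
        · exact h
        · rw [← h] at hgt; simp at hgt
      have hsum : 0 < ∑ s' ∈ Finset.univ.filter
          (fun s' : Fin k ↪ V => A ⊆ Finset.univ.map s'), MH H G s' := by
        by_contra hle
        push_neg at hle
        unfold tH at htA
        nlinarith
      obtain ⟨s₀, -, hs₀⟩ : ∃ s₀ ∈ Finset.univ.filter
          (fun s' : Fin k ↪ V => A ⊆ Finset.univ.map s'), 0 < MH H G s₀ := by
        by_contra hc
        push_neg at hc
        have : (∑ s' ∈ Finset.univ.filter
            (fun s' : Fin k ↪ V => A ⊆ Finset.univ.map s'), MH H G s') ≤ 0 :=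
          Finset.sum_nonpos fun s' hs' => hc s' hs'
        linarith
      -- variance is positive : contradiction
      have hdiag : 0 < MH H G s₀ * MH H G s₀ *
          (p ^ ((Finset.univ.map s₀ ∪ Finset.univ.map s₀).card) - p ^ (2*k)) := by
        rw [Finset.union_self, card_map_univ]
        have : p ^ (2*k) < p ^ k :=
          pow_lt_pow_right_of_lt_one₀ hp0 hp1 (by omega)
        have h0 : 0 < MH H G s₀ * MH H G s₀ := mul_pos hs₀ hs₀
        nlinarith
      have hterm : ∀ s' t' : Fin k ↪ V, 0 ≤ MH H G s' * MH H G t' *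
          (p ^ ((Finset.univ.map s' ∪ Finset.univ.map t').card) - p ^ (2*k)) := by
        intro s' t'
        refine mul_nonneg (mul_nonneg (MH_nonneg H G s') (MH_nonneg H G t')) ?_
        refine sub_nonneg.2 (pow_le_pow_of_le_one hp0.le hp1.le ?_)
        have h1 := Finset.card_union_add_card_inter (Finset.univ.map s') (Finset.univ.map t')
        rw [card_map_univ, card_map_univ] at h1
        omega
      have hVpos' : 0 < Vr := by
        rw [hVrdef, varT_pair, ← hadef]
        refine mul_pos (by positivity) ?_
        have inner : 0 < ∑ t' : Fin k ↪ V, MH H G s₀ * MH H G t' *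
            (p ^ ((Finset.univ.map s₀ ∪ Finset.univ.map t').card) - p ^ (2*k)) := by
          refine lt_of_lt_of_le hdiag ?_
          exact Finset.single_le_sum (fun t' _ => hterm s₀ t') (Finset.mem_univ s₀)
        refine lt_of_lt_of_le inner ?_
        exact Finset.single_le_sum
          (fun s' _ => Finset.sum_nonneg fun t' _ => hterm s' t') (Finset.mem_univ s₀)
      rw [← hV0] at hVpos'
      exact lt_irrefl 0 hVpos'
    rw [hE, hBempty]
    simpa using hRHS0
  · -- main case : positive variance
    set Q := Real.sqrt (M * Vr) with hQdef
    have hQpos : 0 < Q := Real.sqrt_pos.2 (by positivity)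
    set P : Finset (Finset V) :=
      (Finset.univ : Finset V).powerset.filter Finset.Nonempty with hPdef
    set F : Finset V → ℝ := fun A => p ^ (2*k) / p ^ A.card * tH H G A / Q with hFdef
    have hFnn : ∀ A, 0 ≤ F A := fun A =>
      div_nonneg (mul_nonneg (by positivity) (tH_nonneg H G A)) hQpos.le
    have claim1 : ∀ s ∈ B, MH H G s * p ^ k
        ≤ ∑ A ∈ P, (if A ⊆ Finset.univ.map s then MH H G s * F A else 0) := by
      intro s hs
      have hsB : ¬ CMev H G M p s := (Finset.mem_filter.1 hs).2
      unfold CMev at hsB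
      push_neg at hsB
      obtain ⟨A0, hA0s, hA0ne, hgt⟩ := hsB
      rw [← hVrdef] at hgt
      have hA0P : A0 ∈ P :=
        Finset.mem_filter.2 ⟨Finset.mem_powerset.2 (Finset.subset_univ _), hA0ne⟩
      have key : p ^ k ≤ F A0 := by
        set K := A0.card with hKdef
        have ht0 : 0 ≤ tH H G A0 := tH_nonneg H G A0
        have hpK : (0:ℝ) < p ^ K := by positivity
        have hp2k : (0:ℝ) < p ^ (2*k) := by positivity
        have hp2K : (0:ℝ) < p ^ (2*K) := by positivity
        have hMV : M * Vr ≤ (p ^ k / p ^ K * tH H G A0) ^ 2 := by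
          have hre : M * Vr
              = (M * (p ^ (2*K) / p ^ (2*k)) * Vr) * (p ^ (2*k) / p ^ (2*K)) := by
            field_simp
          have hre2 : (p ^ k / p ^ K * tH H G A0) ^ 2
              = tH H G A0 ^ 2 * (p ^ (2*k) / p ^ (2*K)) := by
            rw [mul_pow, div_pow, ← pow_mul, ← pow_mul]
            ring_nf
          rw [hre, hre2]
          exact mul_le_mul_of_nonneg_right hgt.le (by positivity)
        have hsqrt : Q ≤ p ^ k / p ^ K * tH H G A0 := by
          rw [hQdef]
          calc Real.sqrt (M * Vr) ≤ Real.sqrt ((p ^ k / p ^ K * tH H G A0) ^ 2) :=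
                Real.sqrt_le_sqrt hMV
            _ = p ^ k / p ^ K * tH H G A0 := Real.sqrt_sq (by positivity)
        rw [hFdef]
        show p ^ k ≤ p ^ (2*k) / p ^ A0.card * tH H G A0 / Q
        rw [le_div_iff₀ hQpos]
        calc p ^ k * Q ≤ p ^ k * (p ^ k / p ^ K * tH H G A0) :=
              mul_le_mul_of_nonneg_left hsqrt (by positivity)
          _ = p ^ (2*k) / p ^ A0.card * tH H G A0 := by
              rw [← hKdef, two_mul, pow_add]
              ring
      calc MH H G s * p ^ k ≤ MH H G s * F A0 :=
            mul_le_mul_of_nonneg_left key (MH_nonneg H G s)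
        _ = (if A0 ⊆ Finset.univ.map s then MH H G s * F A0 else 0) := by
            rw [if_pos hA0s]
        _ ≤ ∑ A ∈ P, (if A ⊆ Finset.univ.map s then MH H G s * F A else 0) := by
            refine Finset.single_le_sum
              (f := fun A => if A ⊆ Finset.univ.map s then MH H G s * F A else 0)
              (fun A _ => ?_) hA0P
            split_ifs
            · exact mul_nonneg (MH_nonneg H G s) (hFnn A)
            · exact le_refl 0
    rw [hE]
    have step12 : a * ∑ s ∈ B, MH H G s * p ^ k
        ≤ a * ∑ s : Fin k ↪ V, ∑ A ∈ P,
            (if A ⊆ Finset.univ.map s then MH H G s * F A else 0) := by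
      refine mul_le_mul_of_nonneg_left ?_ ha'.le
      calc ∑ s ∈ B, MH H G s * p ^ k
          ≤ ∑ s ∈ B, ∑ A ∈ P, (if A ⊆ Finset.univ.map s then MH H G s * F A else 0) :=
            Finset.sum_le_sum claim1
        _ ≤ ∑ s : Fin k ↪ V, ∑ A ∈ P,
              (if A ⊆ Finset.univ.map s then MH H G s * F A else 0) := by
            refine Finset.sum_le_sum_of_subset_of_nonneg
              (by rw [hBdef]; exact Finset.filter_subset _ _) ?_
            intro s _ _
            refine Finset.sum_nonneg fun A _ => ?_
            split_ifs
            · exact mul_nonneg (MH_nonneg H G s) (hFnn A)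
            · exact le_refl 0
    have step3 : ∑ s : Fin k ↪ V, ∑ A ∈ P,
        (if A ⊆ Finset.univ.map s then MH H G s * F A else 0)
        = ∑ A ∈ P, F A * ((Nat.card (H ≃g H) : ℝ) * tH H G A) := by
      rw [Finset.sum_comm]
      refine Finset.sum_congr rfl fun A _ => ?_
      have hsA : ∑ s : Fin k ↪ V, (if A ⊆ Finset.univ.map s then MH H G s * F A else 0)
          = (∑ s ∈ Finset.univ.filter (fun s : Fin k ↪ V => A ⊆ Finset.univ.map s),
              MH H G s) * F A := by
        rw [← Finset.sum_filter, Finset.sum_mul]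
      rw [hsA]
      have htA : (∑ s ∈ Finset.univ.filter (fun s : Fin k ↪ V => A ⊆ Finset.univ.map s),
          MH H G s) = (Nat.card (H ≃g H) : ℝ) * tH H G A := by
        unfold tH
        rw [← mul_assoc, mul_inv_cancel₀ (ne_of_gt ha), one_mul]
      rw [htA]
      ring
    have step4 : a * ∑ A ∈ P, F A * ((Nat.card (H ≃g H) : ℝ) * tH H G A)
        = ∑ A ∈ P, F A * tH H G A := by
      rw [Finset.mul_sum]
      refine Finset.sum_congr rfl fun A _ => ?_
      calc a * (F A * ((Nat.card (H ≃g H) : ℝ) * tH H G A))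
          = (a * (Nat.card (H ≃g H) : ℝ)) * (F A * tH H G A) := by ring
        _ = F A * tH H G A := by
            rw [hadef, inv_mul_cancel₀ (ne_of_gt ha), one_mul]
    set g : Finset V → ℝ := fun A => p ^ (2*k) / p ^ A.card * tH H G A ^ 2 with hgdef
    have step5 : ∑ A ∈ P, F A * tH H G A = (∑ A ∈ P, g A) / Q := by
      rw [Finset.sum_div]
      refine Finset.sum_congr rfl fun A _ => ?_
      rw [hFdef, hgdef]
      dsimp only
      ring
    set n := Fintype.card V with hndef
    have hmaps : ∀ A ∈ P, A.card ∈ Finset.Icc 1 n := by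
      intro A hA
      obtain ⟨hsub, hne⟩ := Finset.mem_filter.1 hA
      exact Finset.mem_Icc.2 ⟨Finset.card_pos.2 hne, Finset.card_le_univ A⟩
    have hgroup : ∑ A ∈ P, g A
        = ∑ K ∈ Finset.Icc 1 n, ∑ A ∈ P.filter (fun A => A.card = K), g A :=
      (Finset.sum_fiberwise_of_maps_to hmaps g).symm
    have hfib : ∀ K ∈ Finset.Icc 1 n, P.filter (fun A => A.card = K)
        = Finset.powersetCard K (Finset.univ : Finset V) := by
      intro K hK
      have hK1 : 1 ≤ K := (Finset.mem_Icc.1 hK).1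
      ext A
      simp only [hPdef, Finset.mem_filter, Finset.mem_powerset, Finset.mem_powersetCard]
      constructor
      · rintro ⟨⟨h1, h2⟩, h3⟩
        exact ⟨h1, h3⟩
      · rintro ⟨h1, h2⟩
        refine ⟨⟨h1, Finset.card_pos.1 ?_⟩, h2⟩
        omega
    have hsame : ∀ K : ℕ, ∑ A ∈ Finset.powersetCard K (Finset.univ : Finset V), g A
        = ∑ A ∈ Finset.powersetCard K (Finset.univ : Finset V),
            p ^ (2*k) / p ^ K * tH H G A ^ 2 := by
      intro K
      refine Finset.sum_congr rfl fun A hA => ?_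
      rw [hgdef]
      dsimp only
      rw [(Finset.mem_powersetCard.1 hA).2]
    have hKbound : ∀ K ∈ Finset.Icc 1 n,
        ∑ A ∈ Finset.powersetCard K (Finset.univ : Finset V), g A
          ≤ (k.choose K : ℝ) * Vr / (1 - p) := by
      intro K hK
      have h := compare_lemma H G p hp0 hp1.le K (Finset.mem_Icc.1 hK).1
      rw [← hVrdef] at h
      rw [hsame K, le_div_iff₀ hq]
      linarith
    have hsum_eq : ∑ K ∈ Finset.Icc 1 n, (k.choose K : ℝ) * Vr / (1 - p)
        = (∑ K ∈ Finset.Icc 1 n, (k.choose K : ℝ)) * (Vr / (1-p)) := by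
      rw [Finset.sum_mul]
      exact Finset.sum_congr rfl fun K _ => by ring
    have hnat : (∑ K ∈ Finset.Icc 1 n, k.choose K) ≤ 2 ^ k - 1 := by
      have h1 : ∑ K ∈ Finset.Icc 1 n, k.choose K
          = ∑ K ∈ (Finset.Icc 1 n).filter (fun K => K ≤ k), k.choose K := by
        symm
        apply Finset.sum_filter_of_ne
        intro K _ hne
        by_contra hgt
        push_neg at hgt
        exact hne (Nat.choose_eq_zero_of_lt hgt)
      rw [h1]
      have h2 : (Finset.Icc 1 n).filter (fun K => K ≤ k) ⊆ Finset.Icc 1 k := by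
        intro K hK
        simp only [Finset.mem_filter, Finset.mem_Icc] at hK ⊢
        omega
      calc ∑ K ∈ (Finset.Icc 1 n).filter (fun K => K ≤ k), k.choose K
          ≤ ∑ K ∈ Finset.Icc 1 k, k.choose K := Finset.sum_le_sum_of_subset h2
        _ = 2 ^ k - 1 := by
          have h3 := Nat.sum_range_choose k
          have h4 : Finset.range (k+1) = insert 0 (Finset.Icc 1 k) := by
            ext x
            simp only [Finset.mem_range, Finset.mem_insert, Finset.mem_Icc]
            omega
          rw [h4, Finset.sum_insert (by simp)] at h3
          simp only [Nat.choose_zero_right] at h3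
          omega
    have hcast : (∑ K ∈ Finset.Icc 1 n, (k.choose K : ℝ)) ≤ (2:ℝ)^k - 1 := by
      have h5 : (1:ℕ) ≤ 2^k := Nat.one_le_two_pow
      have h6 : (∑ K ∈ Finset.Icc 1 n, (k.choose K : ℝ))
          = ((∑ K ∈ Finset.Icc 1 n, k.choose K : ℕ) : ℝ) := by
        push_cast
        rfl
      rw [h6]
      calc ((∑ K ∈ Finset.Icc 1 n, k.choose K : ℕ) : ℝ)
          ≤ ((2^k - 1 : ℕ) : ℝ) := Nat.cast_le.2 hnat
        _ = (2:ℝ)^k - 1 := by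
          rw [Nat.cast_sub h5]
          push_cast
          ring
    have hfrac : 0 ≤ Vr / (1-p) := div_nonneg hVr0 hq.le
    have hfinal : ((2:ℝ)^k - 1) * (Vr / (1-p)) / Q
        = ((2:ℝ)^k - 1) / (Real.sqrt M * (1 - p)) * Real.sqrt Vr := by
      have hsM : 0 < Real.sqrt M := Real.sqrt_pos.2 hM
      have hsV : 0 < Real.sqrt Vr := Real.sqrt_pos.2 hVpos
      have hQ : Q = Real.sqrt M * Real.sqrt Vr := by
        rw [hQdef, Real.sqrt_mul hM.le]
      rw [hQ]
      calc ((2:ℝ)^k - 1) * (Vr / (1-p)) / (Real.sqrt M * Real.sqrt Vr)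
          = ((2:ℝ)^k - 1) * ((Real.sqrt Vr * Real.sqrt Vr) / (1-p)) /
              (Real.sqrt M * Real.sqrt Vr) := by
            rw [Real.mul_self_sqrt hVr0]
        _ = ((2:ℝ)^k - 1) / (Real.sqrt M * (1-p)) * Real.sqrt Vr := by
            rw [div_eq_iff (ne_of_gt (mul_pos hsM hsV))]
            field_simp
    calc a * ∑ s ∈ B, MH H G s * p ^ k
        ≤ a * ∑ s : Fin k ↪ V, ∑ A ∈ P,
            (if A ⊆ Finset.univ.map s then MH H G s * F A else 0) := step12
      _ = a * ∑ A ∈ P, F A * ((Nat.card (H ≃g H) : ℝ) * tH H G A) := by rw [step3]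
      _ = ∑ A ∈ P, F A * tH H G A := step4
      _ = (∑ A ∈ P, g A) / Q := step5
      _ = (∑ K ∈ Finset.Icc 1 n, ∑ A ∈ Finset.powersetCard K (Finset.univ : Finset V),
            g A) / Q := by
          rw [hgroup]
          congr 1
          exact Finset.sum_congr rfl fun K hK => by rw [hfib K hK]
      _ ≤ (∑ K ∈ Finset.Icc 1 n, (k.choose K : ℝ) * Vr / (1 - p)) / Q := by
          gcongr with K hK
          exact hKbound K hK
      _ = (∑ K ∈ Finset.Icc 1 n, (k.choose K : ℝ)) * (Vr / (1-p)) / Q := by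
          rw [hsum_eq]
      _ ≤ ((2:ℝ)^k - 1) * (Vr / (1-p)) / Q := by
          have := mul_le_mul_of_nonneg_right hcast hfrac
          gcongr
      _ = ((2:ℝ)^k - 1) / (Real.sqrt M * (1 - p)) * Real.sqrt Vr := hfinal
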